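/- Let S be a zero-sum free commutative semiring. For every WTGc G over S, the support supp(G) = {t ∈ T_Σ | G_t ≠ 0} is constraint-regular, i.e. it is generated by some tree grammar with constraints (a WTGc over the Boolean semiring). Moreover, if G is positive (respectively classic), then supp(G) is positive (respectively classic) constraint-regular. -/

import Mathlib

/-! Common framework: ranked trees, weighted tree grammars with constraints (WTGc). -/

/-- Unranked trees over a symbol type `α`; wellformedness w.r.t. an arity map
is imposed separately. -/
inductive RTree (α : Type) : Type
  | node : α → List (RTree α) → RTree α

namespace RTree

variable {α β : Type}

/-- The subtree of `t` at position `w` (positions are lists of child indices). -/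
def subtreeAt : RTree α → List ℕ → Option (RTree α)
  | t, [] => some t
  | node _ ts, i :: w => (ts[i]?).bind fun c => subtreeAt c w
termination_by t w => w.length

/-- Replace the subtree at position `w` by `s`. -/
def replaceAt : RTree α → List ℕ → RTree α → RTree α
  | _, [], s => s
  | node a ts, i :: w, s =>
      node a (ts.mapIdx fun j c => if j = i then replaceAt c w s else c)
termination_by t w s => w.length

/-- Relabeling of trees. -/
def map (f : α → β) : RTree α → RTree β
  | node a ts => node (f a) (ts.attach.map fun c => map f c.1)
termination_by t => sizeOf t
decreasing_by
  simp_wf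
  have := List.sizeOf_lt_of_mem c.2
  omega

/-- The size of a tree: its number of positions. -/
def size : RTree α → ℕ
  | node _ ts => 1 + (ts.attach.map fun c => size c.1).sum
termination_by t => sizeOf t
decreasing_by
  simp_wf
  have := List.sizeOf_lt_of_mem c.2
  omega

/-- The height of a tree: the maximal length of one of its positions. -/
def height : RTree α → ℕ
  | node _ ts => (ts.attach.map fun c => height c.1 + 1).foldr max 0
termination_by t => sizeOf t
decreasing_by
  simp_wf
  have := List.sizeOf_lt_of_mem c.2
  omega

/-- Wellformedness of a tree w.r.t. a ranked alphabet: the number of children of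
every node equals the rank of its label. -/
inductive WF (ar : α → ℕ) : RTree α → Prop
  | node {a : α} {ts : List (RTree α)} :
      ts.length = ar a → (∀ t ∈ ts, WF ar t) → WF ar (node a ts)

/-- Substitution of trees for the nonterminal-labelled (i.e. `Sum.inr`-labelled)
leaves: the leaf at absolute position `w` is replaced by `θ w`.  The second
argument is the position of the current subtree. -/
def substNT {Q : Type} (θ : List ℕ → RTree α) : RTree (α ⊕ Q) → List ℕ → RTree α
  | node (Sum.inr _) _, w => θ w
  | node (Sum.inl a) ts, w =>
      node a (ts.attach.mapIdx fun i c => substNT θ c.1 (w ++ [i]))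
termination_by t _ => sizeOf t
decreasing_by
  simp_wf
  have := List.sizeOf_lt_of_mem c.2
  omega

/-- The list of pairs (position, nonterminal) of the nonterminal-labelled
positions of a tree in `T_Σ(Q)`, in left-to-right order. -/
def ntPos {Q : Type} : RTree (α ⊕ Q) → List (List ℕ × Q)
  | node (Sum.inr q) _ => [([], q)]
  | node (Sum.inl _) ts =>
      (ts.attach.mapIdx fun i c => (ntPos c.1).map fun x => (i :: x.1, x.2)).flatten
termination_by t => sizeOf t
decreasing_by
  simp_wf
  have := List.sizeOf_lt_of_mem c.2
  omega

/-- Substitute the trees of the list `us` for the variables (`Sum.inr i` stands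
for the variable `x_{i+1}`); variables without a corresponding list entry stay. -/
def substVL (us : List (RTree (β ⊕ ℕ))) : RTree (β ⊕ ℕ) → RTree (β ⊕ ℕ)
  | node (Sum.inr i) ts => (us[i]?).getD (node (Sum.inr i) ts)
  | node (Sum.inl b) ts => node (Sum.inl b) (ts.attach.map fun c => substVL us c.1)
termination_by t => sizeOf t
decreasing_by
  simp_wf
  have := List.sizeOf_lt_of_mem c.2
  omega

/-- Application of the tree homomorphism induced by `h : α → T_β(X)`. -/
def applyHom (h : α → RTree (β ⊕ ℕ)) : RTree α → RTree (β ⊕ ℕ)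
  | node a ts => substVL (ts.attach.map fun c => applyHom h c.1) (h a)
termination_by t => sizeOf t
decreasing_by
  simp_wf
  have := List.sizeOf_lt_of_mem c.2
  omega

/-- A tree `t` satisfies the constraint `(v, v')` if both positions exist in `t`
and the corresponding subtrees are equal. -/
def satC (t : RTree α) (c : List ℕ × List ℕ) : Prop :=
  ∃ s, t.subtreeAt c.1 = some s ∧ t.subtreeAt c.2 = some s

end RTree

/-- The strict lexicographic order on positions in which proper prefixes are
*larger* than their extensions (and `ε` is the largest element). -/
inductive PosLt : List ℕ → List ℕ → Prop
  | ne_nil (i : ℕ) (w : List ℕ) : PosLt (i :: w) []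
  | head {i j : ℕ} (v w : List ℕ) : i < j → PosLt (i :: v) (j :: w)
  | tail {i : ℕ} {v w : List ℕ} : PosLt v w → PosLt (i :: v) (i :: w)

/-- A derivation (a list of production/position pairs) is left-most if its
positions are strictly increasing w.r.t. `PosLt`. -/
def Leftmost {P : Type} (d : List (P × List ℕ)) : Prop :=
  List.Chain' PosLt (d.map Prod.snd)

/-- The two-element Boolean semiring. -/
inductive B2 : Type
  | zero
  | one
  deriving DecidableEq

namespace B2

def add : B2 → B2 → B2
  | zero, x => x
  | one, _ => one

def mul : B2 → B2 → B2
  | zero, _ => zero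
  | one, x => x

instance : Zero B2 := ⟨zero⟩
instance : One B2 := ⟨one⟩
instance : Add B2 := ⟨add⟩
instance : Mul B2 := ⟨mul⟩

instance : CommSemiring B2 where
  add_assoc := fun a b c => by cases a <;> cases b <;> cases c <;> rfl
  zero_add := fun a => by cases a <;> rfl
  add_zero := fun a => by cases a <;> rfl
  add_comm := fun a b => by cases a <;> cases b <;> rfl
  mul_assoc := fun a b c => by cases a <;> cases b <;> cases c <;> rfl
  one_mul := fun a => by cases a <;> rfl
  mul_one := fun a => by cases a <;> rfl
  zero_mul := fun a => by cases a <;> rfl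
  mul_zero := fun a => by cases a <;> rfl
  left_distrib := fun a b c => by cases a <;> cases b <;> cases c <;> rfl
  right_distrib := fun a b c => by cases a <;> cases b <;> cases c <;> rfl
  mul_comm := fun a b => by cases a <;> cases b <;> rfl
  nsmul := nsmulRec
  npow := npowRec
  nsmul_zero := fun a => rfl
  nsmul_succ := fun n a => rfl
  npow_zero := fun a => rfl
  npow_succ := fun n a => rfl

end B2

/-- A weighted tree grammar with constraints (WTGc) over the commutative
semiring `S` and the ranked alphabet `(Γ, ar)`: finitely many nonterminals `Q`
with final weights, and finitely many productions `(lhs p, tgt p, eqc p, nec p)`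
with weights, where the left-hand side is a wellformed tree over `Γ` and the
nonterminals that is not itself a nonterminal. -/
structure WTGc (S : Type) [CommSemiring S] (Γ : Type) (ar : Γ → ℕ) where
  Q : Type
  P : Type
  finQ : Finite Q
  finP : Finite P
  final : Q → S
  lhs : P → RTree (Γ ⊕ Q)
  tgt : P → Q
  eqc : P → Finset (List ℕ × List ℕ)
  nec : P → Finset (List ℕ × List ℕ)
  wt : P → S
  lhs_wf : ∀ p, (lhs p).WF (Sum.elim ar fun _ => 0)
  lhs_ne : ∀ (p : P) (q : Q), lhs p ≠ RTree.node (Sum.inr q) []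

namespace WTGc

variable {S : Type} [CommSemiring S] {Γ : Type} {ar : Γ → ℕ}

/-- A single derivation step of `G` on input tree `t`: at position `w` of the
sentential form `ξ` the left-hand side of production `p` is replaced by its
target nonterminal, provided `t|_w` satisfies all equality constraints and
dissatisfies all inequality constraints of `p`. -/
def Step (G : WTGc S Γ ar) (t : RTree Γ) (ξ : RTree (Γ ⊕ G.Q)) (p : G.P)
    (w : List ℕ) (ζ : RTree (Γ ⊕ G.Q)) : Prop :=
  ξ.subtreeAt w = some (G.lhs p) ∧
  ζ = ξ.replaceAt w (RTree.node (Sum.inr (G.tgt p)) []) ∧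
  ∃ s, t.subtreeAt w = some s ∧
    (∀ c ∈ G.eqc p, RTree.satC s c) ∧ (∀ c ∈ G.nec p, ¬ RTree.satC s c)

/-- `Derives G t ξ d ζ`: the sequence `d` of production/position pairs is a
derivation of `G` for the input tree `t` from the sentential form `ξ` to `ζ`. -/
inductive Derives (G : WTGc S Γ ar) (t : RTree Γ) :
    RTree (Γ ⊕ G.Q) → List (G.P × List ℕ) → RTree (Γ ⊕ G.Q) → Prop
  | refl (ξ : RTree (Γ ⊕ G.Q)) : Derives G t ξ [] ξ
  | step {ξ ζ η : RTree (Γ ⊕ G.Q)} {p : G.P} {w : List ℕ} {d : List (G.P × List ℕ)} :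
      G.Step t ξ p w ζ → Derives G t ζ d η → Derives G t ξ ((p, w) :: d) η

/-- `D G q t` : the set of complete left-most derivations of `G` for `t` to `q`. -/
def D (G : WTGc S Γ ar) (q : G.Q) (t : RTree Γ) : Set (List (G.P × List ℕ)) :=
  {d | Derives G t (t.map Sum.inl) d (RTree.node (Sum.inr q) []) ∧ Leftmost d}

/-- The weight of a derivation: the product of the weights of its productions. -/
def wtD (G : WTGc S Γ ar) (d : List (G.P × List ℕ)) : S :=
  (d.map fun x => G.wt x.1).prod

/-- The weight of `t` at nonterminal `q`: the sum of the weights of all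
complete left-most derivations of `G` for `t` to `q`. -/
noncomputable def qWeight (G : WTGc S Γ ar) (q : G.Q) (t : RTree Γ) : S :=
  ∑ᶠ d ∈ G.D q t, G.wtD d

/-- The weighted tree language generated by `G`. -/
noncomputable def weight (G : WTGc S Γ ar) (t : RTree Γ) : S :=
  ∑ᶠ q : G.Q, G.final q * G.qWeight q t

/-- The support of `G`. -/
def supp (G : WTGc S Γ ar) : Set (RTree Γ) := {t | G.weight t ≠ 0}

/-- Two WTGc are equivalent if they generate the same weighted tree language. -/
def Equivalent (G G' : WTGc S Γ ar) : Prop := ∀ t, G.weight t = G'.weight t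

/-- A production is normalized if its left-hand side is of the form
`σ(q_1, …, q_k)` with nonterminals `q_i`. -/
def NormalizedProd (G : WTGc S Γ ar) (p : G.P) : Prop :=
  ∃ (σ : Γ) (qs : List G.Q),
    G.lhs p = RTree.node (Sum.inl σ) (qs.map fun q => RTree.node (Sum.inr q) [])

/-- A WTGc is a WTAc if all its productions are normalized. -/
def IsWTAc (G : WTGc S Γ ar) : Prop := ∀ p, G.NormalizedProd p

/-- A WTGc is positive if no production has inequality constraints. -/
def Positive (G : WTGc S Γ ar) : Prop := ∀ p, G.nec p = ∅

/-- A WTGc is unconstrained (a WTG) if no production has any constraints. -/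
def Unconstrained (G : WTGc S Γ ar) : Prop := ∀ p, G.eqc p = ∅ ∧ G.nec p = ∅

/-- A weighted tree automaton: normalized and unconstrained. -/
def IsWTA (G : WTGc S Γ ar) : Prop := G.IsWTAc ∧ G.Unconstrained

/-- Position `w` of `ℓ` is labelled by the nonterminal `q`. -/
def ntLabelAt {Q : Type} (ℓ : RTree (Γ ⊕ Q)) (w : List ℕ) (q : Q) : Prop :=
  ℓ.subtreeAt w = some (RTree.node (Sum.inr q) [])

/-- Position `w` of `ℓ` is a nonterminal-labelled position. -/
def IsNTpos {Q : Type} (ℓ : RTree (Γ ⊕ Q)) (w : List ℕ) : Prop :=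
  ∃ q : Q, ntLabelAt ℓ w q

/-- A WTGc is classic if all constrained positions of all productions are
nonterminal-labelled positions of the respective left-hand side. -/
def Classic (G : WTGc S Γ ar) : Prop :=
  ∀ p, ∀ c ∈ G.eqc p ∪ G.nec p, IsNTpos (G.lhs p) c.1 ∧ IsNTpos (G.lhs p) c.2

/-- Boolean final weights. -/
def BooleanFinal (G : WTGc S Γ ar) : Prop := ∀ q, G.final q = 0 ∨ G.final q = 1

/-- Unambiguous: every tree has at most one complete left-most derivation to a
nonterminal with non-zero final weight. -/
def Unambiguous (G : WTGc S Γ ar) : Prop :=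
  ∀ (t : RTree Γ) (q q' : G.Q) (d d' : List (G.P × List ℕ)),
    G.final q ≠ 0 → G.final q' ≠ 0 → d ∈ G.D q t → d' ∈ G.D q' t → q = q' ∧ d = d'

/-- Constraint-determined: two productions never differ only in their
constraint sets. -/
def ConstraintDetermined (G : WTGc S Γ ar) : Prop :=
  ∀ p p' : G.P, G.lhs p = G.lhs p' → G.tgt p = G.tgt p' →
    G.eqc p = G.eqc p' ∧ G.nec p = G.nec p'

/-- `bot` is a sink nonterminal of `G`. -/
def SinkNT (G : WTGc S Γ ar) (bot : G.Q) : Prop :=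
  G.final bot = 0 ∧
  (∀ p, G.tgt p = bot →
    G.wt p = 1 ∧ G.eqc p = ∅ ∧ G.nec p = ∅ ∧
    ∃ σ : Γ, G.lhs p =
      RTree.node (Sum.inl σ) (List.replicate (ar σ) (RTree.node (Sum.inr bot) []))) ∧
  (∀ σ : Γ, ∃ p, G.tgt p = bot ∧ G.lhs p =
      RTree.node (Sum.inl σ) (List.replicate (ar σ) (RTree.node (Sum.inr bot) [])))

/-- The equivalence on positions generated by a set of equality constraints. -/
inductive CEqv (E : Finset (List ℕ × List ℕ)) : List ℕ → List ℕ → Prop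
  | base {v v' : List ℕ} : (v, v') ∈ E → CEqv E v v'
  | refl (v : List ℕ) : CEqv E v v
  | symm {v v' : List ℕ} : CEqv E v v' → CEqv E v' v
  | trans {u v w : List ℕ} : CEqv E u v → CEqv E v w → CEqv E u w

/-- Eq-restricted (Definition 3.2): a positive classic WTGc with a sink
nonterminal `bot` such that within every equivalence class of constrained
nonterminal positions of a left-hand side all nonterminals are `bot` except
for exactly one governing position. -/
def EqRestricted (G : WTGc S Γ ar) (bot : G.Q) : Prop :=
  G.SinkNT bot ∧ G.Classic ∧ G.Positive ∧
  ∀ (p : G.P) (w : List ℕ) (q : G.Q), ntLabelAt (G.lhs p) w q →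
    ∃ q' : G.Q,
      (∀ (w' : List ℕ) (q'' : G.Q), CEqv (G.eqc p) w w' →
          ntLabelAt (G.lhs p) w' q'' → q'' = q' ∨ q'' = bot) ∧
      (∃! w' : List ℕ, CEqv (G.eqc p) w w' ∧ ntLabelAt (G.lhs p) w' q')

end WTGc

/-- A tree homomorphism from `(Γ, arΓ)` to `(Δ, arΔ)`, given by its defining
map: `hmap a ∈ T_Δ(X_{arΓ a})`, where `Sum.inr i` represents the variable
`x_{i+1}`. -/
structure TreeHom (Γ : Type) (arΓ : Γ → ℕ) (Δ : Type) (arΔ : Δ → ℕ) where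
  hmap : Γ → RTree (Δ ⊕ ℕ)
  hmap_wf : ∀ a, (hmap a).WF (Sum.elim arΔ fun _ => 0)
  hmap_var : ∀ (a : Γ) (i : ℕ) (w : List ℕ),
    (hmap a).subtreeAt w = some (RTree.node (Sum.inr i) []) → i < arΓ a

namespace TreeHom

variable {Γ Δ : Type} {arΓ : Γ → ℕ} {arΔ : Δ → ℕ}

/-- Nondeleting: every variable occurs in the defining tree. -/
def Nondeleting (h : TreeHom Γ arΓ Δ arΔ) : Prop :=
  ∀ (a : Γ), ∀ i < arΓ a, ∃ w : List ℕ,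
    (h.hmap a).subtreeAt w = some (RTree.node (Sum.inr i) [])

/-- Nonerasing: no defining tree is a variable. -/
def Nonerasing (h : TreeHom Γ arΓ Δ arΔ) : Prop :=
  ∀ a : Γ, ∃ (δ : Δ) (ts : List (RTree (Δ ⊕ ℕ))), h.hmap a = RTree.node (Sum.inl δ) ts

/-- Application of the induced tree homomorphism. -/
def apply (h : TreeHom Γ arΓ Δ arΔ) : RTree Γ → RTree (Δ ⊕ ℕ) :=
  RTree.applyHom h.hmap

/-- The preimage of `u ∈ T_Δ` under the induced tree homomorphism. -/
def preimage (h : TreeHom Γ arΓ Δ arΔ) (u : RTree Δ) : Set (RTree Γ) :=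
  {t | t.WF arΓ ∧ h.apply t = u.map Sum.inl}

/-- The image `h(A)` of a weighted tree language `A` under `h`. -/
noncomputable def image {S : Type} [CommSemiring S] (h : TreeHom Γ arΓ Δ arΔ)
    (A : RTree Γ → S) (u : RTree Δ) : S :=
  ∑ᶠ t ∈ h.preimage u, A t

end TreeHom

/-! Over a zero-sum free semiring, `t` lies in the support of `G` iff some complete derivation `d`
of `t` to some `q` has `final q * wtD d ≠ 0`. This product only depends on the vector `v : P → ℕ`
counting how often each production occurs in `d`, and the vectors for which it vanishes form an
upward closed set. By Dickson's lemma, membership in such a set only depends on `v` truncated at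
some bound `B`, i.e. on the class of `v` in a finite quotient monoid of `ℕ^P`. The Boolean grammar
annotates every nonterminal with the class of the count vector of the subderivation below it and
accepts `(q, m)` iff `m` is a class on which `final q * ∏ wt p ^ v p` does not vanish. Its
productions are those of `G` with annotated nonterminals and the same constraints, so being
positive or classic is inherited. -/

theorem List.finite_map_preimage_singleton {α β : Type} {g : α → β} {l : List β}
    (hg : ∀ b ∈ l, (g ⁻¹' {b}).Finite) : (List.map g ⁻¹' {l}).Finite := by
  induction l with
  | nil => exact (Set.finite_singleton []).subset fun l hl => by simpa using hl
  | cons b l ih =>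
    refine (((hg b (by simp)).prod (ih fun b' hb' => hg b' (by simp [hb']))).image
      fun x => x.1 :: x.2).subset ?_
    rintro (_ | ⟨a, l'⟩) h
    · simp at h
    · simp only [Set.mem_preimage, Set.mem_singleton_iff, List.map_cons, List.cons.injEq] at h
      exact ⟨(a, l'), ⟨h.1, h.2⟩, rfl⟩

theorem List.exists_sum_map_set {α M : Type} [AddCommMonoid M] (h : α → M) :
    ∀ {l : List α} {i : ℕ} {c : α}, l[i]? = some c →
      ∃ R, (l.map h).sum = h c + R ∧ ∀ x, ((l.set i x).map h).sum = h x + R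
  | a :: l, 0, c, hc => by
    obtain rfl : a = c := by simpa using hc
    exact ⟨(l.map h).sum, by simp, fun x => by simp⟩
  | a :: l, i + 1, c, hc => by
    obtain ⟨R, h1, h2⟩ := exists_sum_map_set h (l := l) (by simpa using hc)
    refine ⟨h a + R, by simp [h1]; abel, fun x => ?_⟩
    rw [List.set_cons_succ, List.map_cons, List.sum_cons, h2]
    abel

theorem List.mapIdx_ite_eq_set {α : Type} (f : α → α) {l : List α} {i : ℕ} {c : α}
    (hc : l[i]? = some c) : (l.mapIdx fun j x => if j = i then f x else x) = l.set i (f c) := by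
  obtain ⟨hi, rfl⟩ := List.getElem?_eq_some_iff.mp hc
  refine List.ext_getElem (by simp) fun j _ _ => ?_
  simp only [List.getElem_mapIdx, List.getElem_set]
  split_ifs <;> grind

theorem List.finite_setOf_length_le_of_forall_mem {α : Type} {s : Set α} (hs : s.Finite)
    (n : ℕ) : {l : List α | l.length ≤ n ∧ ∀ x ∈ l, x ∈ s}.Finite := by
  have := hs.to_subtype
  refine ((List.finite_length_le s n).image (List.map Subtype.val)).subset ?_
  rintro l ⟨hlen, hmem⟩
  exact ⟨l.attach.map fun x => ⟨x.1, hmem x.1 x.2⟩, by simpa using hlen, by simp⟩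

theorem List.sum_map_pi_single_one {P : Type} [DecidableEq P] (l : List P) :
    (l.map fun p => (Pi.single p 1 : P → ℕ)).sum = fun p => l.count p := by
  induction l with
  | nil => rfl
  | cons a l ih =>
    funext p
    rw [List.map_cons, List.sum_cons, Pi.add_apply, ih, List.count_cons, Pi.single_apply]
    by_cases h : p = a <;> simp [h, Ne.symm, add_comm]

theorem Finset.sum_ne_zero_iff_of_zeroSumFree {ι S : Type} [AddCommMonoid S]
    (hzsf : ∀ s s' : S, s + s' = 0 → s = 0 ∧ s' = 0) (u : Finset ι) (f : ι → S) :
    ∑ i ∈ u, f i ≠ 0 ↔ ∃ i ∈ u, f i ≠ 0 := by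
  refine ⟨fun h => by_contra fun h' => h (Finset.sum_eq_zero (by simpa using h')), ?_⟩
  induction u using Finset.cons_induction with
  | empty => simp
  | cons a u ha ih =>
    rw [Finset.sum_cons]
    rintro ⟨i, hi, hfi⟩ hsum
    obtain ⟨ha0, hu0⟩ := hzsf _ _ hsum
    rcases Finset.mem_cons.mp hi with rfl | hi
    · exact hfi ha0
    · exact ih ⟨i, hi, hfi⟩ hu0

namespace RTree

variable {α β γ : Type}

theorem ind {motive : RTree α → Prop}
    (node : ∀ a ts, (∀ t ∈ ts, motive t) → motive (node a ts)) : ∀ t, motive t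
  | .node a ts => node a ts fun t _ => ind node t
termination_by t => sizeOf t
decreasing_by simp_wf; have := List.sizeOf_lt_of_mem ‹t ∈ ts›; omega

@[simp]
theorem map_node (f : α → β) (a : α) (ts : List (RTree α)) :
    (node a ts).map f = node (f a) (ts.map (RTree.map f)) := by
  rw [RTree.map]
  simp

theorem map_map (f : β → γ) (g : α → β) (t : RTree α) : (t.map g).map f = t.map (f ∘ g) := by
  induction t using RTree.ind with
  | node a ts ih => simpa using List.map_congr_left ih

@[simp]
theorem subtreeAt_nil (t : RTree α) : t.subtreeAt [] = some t := by
  rw [subtreeAt]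

@[simp]
theorem subtreeAt_cons (a : α) (ts : List (RTree α)) (i : ℕ) (w : List ℕ) :
    (node a ts).subtreeAt (i :: w) = ts[i]?.bind (·.subtreeAt w) := by
  rw [subtreeAt]

theorem subtreeAt_map (f : α → β) (t : RTree α) (w : List ℕ) :
    (t.map f).subtreeAt w = (t.subtreeAt w).map (RTree.map f) := by
  induction w generalizing t with
  | nil => simp
  | cons i w ih =>
    obtain ⟨a, ts⟩ := t
    cases hc : ts[i]? <;> simp [hc, ih]

theorem replaceAt_map (f : α → β) (w : List ℕ) (t s : RTree α) :
    (t.replaceAt w s).map f = (t.map f).replaceAt w (s.map f) := by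
  induction w generalizing t with
  | nil => simp [replaceAt]
  | cons i w ih =>
    obtain ⟨a, ts⟩ := t
    rw [replaceAt, map_node, map_node, replaceAt]
    congr 1
    refine List.ext_getElem (by simp) fun j _ _ => ?_
    simp only [List.getElem_map, List.getElem_mapIdx]
    split_ifs <;> simp [ih]

theorem WF.of_map {f : α → β} {A : β → ℕ} {t : RTree α} (h : (t.map f).WF A) : t.WF (A ∘ f) := by
  induction t using RTree.ind with
  | node a ts ih =>
    rw [map_node] at h
    obtain ⟨hlen, hall⟩ := h
    exact .node (by simpa using hlen) fun c hc => ih c hc (hall _ (List.mem_map_of_mem hc))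

theorem finite_setOf_isSome_subtreeAt (t : RTree α) :
    {w | (t.subtreeAt w).isSome}.Finite := by
  induction t using RTree.ind with
  | node a ts ih =>
    refine ((ts.finite_toSet.biUnion fun c hc => (Set.finite_Iio ts.length).biUnion
      fun i _ => (ih c hc).image (List.cons i)).insert []).subset ?_
    rintro (_ | ⟨i, w⟩) hw
    · exact Set.mem_insert _ _
    · simp only [Set.mem_ofPred_eq, subtreeAt_cons] at hw
      cases hc : ts[i]? with
      | none => simp [hc] at hw
      | some c =>
        rw [hc, Option.bind_some] at hw
        obtain ⟨hi, -⟩ := List.getElem?_eq_some_iff.mp hc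
        exact Set.mem_insert_of_mem _ (Set.mem_biUnion (List.mem_of_getElem? hc)
          (Set.mem_biUnion (Set.mem_Iio.mpr hi) ⟨w, hw, rfl⟩))

theorem finite_map_preimage_singleton {f : α → β} (hf : ∀ b, (f ⁻¹' {b}).Finite)
    (t : RTree β) : (RTree.map f ⁻¹' {t}).Finite := by
  induction t using RTree.ind with
  | node b ts ih =>
    refine (((hf b).prod (List.finite_map_preimage_singleton ih)).image
      fun x => node x.1 x.2).subset ?_
    rintro ⟨a, ss⟩ h
    simp only [Set.mem_preimage, Set.mem_singleton_iff, map_node, node.injEq] at h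
    exact ⟨(a, ss), ⟨h.1, h.2⟩, rfl⟩

section LabelSum

variable {M : Type} [AddCommMonoid M]

def labelSum (g : α → M) : RTree α → M
  | node a ts => g a + (ts.attach.map fun c => labelSum g c.1).sum
termination_by t => sizeOf t
decreasing_by simp_wf; have := List.sizeOf_lt_of_mem c.2; omega

@[simp]
theorem labelSum_node (g : α → M) (a : α) (ts : List (RTree α)) :
    (node a ts).labelSum g = g a + (ts.map (labelSum g)).sum := by
  rw [labelSum]
  simp

theorem labelSum_replaceAt (g : α → M) :
    ∀ {w : List ℕ} {t s : RTree α}, t.subtreeAt w = some s →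
      ∃ R, t.labelSum g = s.labelSum g + R ∧ ∀ r, (t.replaceAt w r).labelSum g = r.labelSum g + R
  | [], t, s, hs => by
    obtain rfl : t = s := by simpa using hs
    exact ⟨0, by simp, fun r => by simp [replaceAt]⟩
  | i :: w, node a ts, s, hs => by
    cases hc : ts[i]? with
    | none => simp [hc] at hs
    | some c =>
      obtain ⟨R, h1, h2⟩ := labelSum_replaceAt g (by simpa [hc] using hs)
      obtain ⟨R', h1', h2'⟩ := List.exists_sum_map_set (labelSum g) hc
      refine ⟨R + (g a + R'), by rw [labelSum_node, h1', h1]; abel, fun r => ?_⟩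
      rw [replaceAt, List.mapIdx_ite_eq_set (·.replaceAt w r) hc, labelSum_node, h2', h2]
      abel

end LabelSum

end RTree

theorem B2.add_eq_zero_iff (s s' : B2) : s + s' = 0 ↔ s = 0 ∧ s' = 0 := by
  cases s <;> cases s' <;> decide

namespace WTGc

variable {S : Type} [CommSemiring S] {Γ : Type} {ar : Γ → ℕ}

section Support

variable (G : WTGc S Γ ar)

theorem exists_lhs_eq_node_inl (p : G.P) :
    ∃ (a : Γ) (ts : List (RTree (Γ ⊕ G.Q))), G.lhs p = .node (.inl a) ts := by
  rcases h : G.lhs p with ⟨a | q, ts⟩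
  · exact ⟨a, ts, rfl⟩
  · have hwf := G.lhs_wf p
    rw [h] at hwf
    obtain ⟨hlen, -⟩ := hwf
    exact absurd (h.trans (by simpa using hlen)) (G.lhs_ne p q)

def terminalCount {Q : Type} (ξ : RTree (Γ ⊕ Q)) : ℕ :=
  ξ.labelSum (Sum.elim (fun _ => 1) fun _ => 0)

variable {G}

theorem Step.terminalCount_lt {t : RTree Γ} {ξ ζ : RTree (Γ ⊕ G.Q)} {p : G.P} {w : List ℕ}
    (h : G.Step t ξ p w ζ) : terminalCount ζ < terminalCount ξ := by
  obtain ⟨hsub, rfl, -⟩ := h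
  obtain ⟨R, h1, h2⟩ := RTree.labelSum_replaceAt (Sum.elim (fun _ => 1) fun _ => 0) hsub
  obtain ⟨a, ts, hts⟩ := G.exists_lhs_eq_node_inl p
  rw [hts] at h1
  simp [terminalCount, h1, h2]

theorem Derives.length_le {t : RTree Γ} {ξ η : RTree (Γ ⊕ G.Q)} {d : List (G.P × List ℕ)}
    (h : G.Derives t ξ d η) : d.length ≤ terminalCount ξ := by
  induction h with
  | refl => simp
  | step hs _ ih => have := hs.terminalCount_lt; simp only [List.length_cons]; omega

theorem Derives.isSome_subtreeAt {t : RTree Γ} {ξ η : RTree (Γ ⊕ G.Q)}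
    {d : List (G.P × List ℕ)} (h : G.Derives t ξ d η) : ∀ x ∈ d, (t.subtreeAt x.2).isSome := by
  induction h with
  | refl => simp
  | step hs _ ih =>
    obtain ⟨-, -, s, hs, -⟩ := hs
    simpa [hs] using ih

variable (G)

theorem finite_D (q : G.Q) (t : RTree Γ) : (G.D q t).Finite := by
  have := G.finP
  refine (List.finite_setOf_length_le_of_forall_mem (Set.finite_univ.prod
    t.finite_setOf_isSome_subtreeAt) (terminalCount (t.map (Sum.inl (β := G.Q))))).subset ?_
  rintro d ⟨hd, -⟩
  exact ⟨hd.length_le, fun x hx => ⟨trivial, hd.isSome_subtreeAt x hx⟩⟩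

theorem weight_ne_zero_iff (hzsf : ∀ s s' : S, s + s' = 0 → s = 0 ∧ s' = 0) (t : RTree Γ) :
    G.weight t ≠ 0 ↔ ∃ q, ∃ d ∈ G.D q t, G.final q * G.wtD d ≠ 0 := by
  have := G.finQ
  have := Fintype.ofFinite G.Q
  simp only [weight, qWeight, finsum_eq_sum_of_fintype,
    finsum_mem_eq_finite_toFinset_sum _ (G.finite_D _ t), Finset.mul_sum]
  simp only [Finset.sum_ne_zero_iff_of_zeroSumFree hzsf, Set.Finite.mem_toFinset,
    Finset.mem_univ, true_and]

theorem wtD_eq_finprod [DecidableEq G.P] (d : List (G.P × List ℕ)) :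
    G.wtD d = ∏ᶠ p, G.wt p ^ (d.map Prod.fst).count p := by
  simpa [wtD, Function.comp_def] using
    Multiset.prod_map_eq_finprod (d.map Prod.fst : Multiset G.P) G.wt

end Support

section Annotation

open RTree

section

variable {Q M : Type}

def eraseAnn (ξ : RTree (Γ ⊕ Q × M)) : RTree (Γ ⊕ Q) :=
  ξ.map (Sum.map id Prod.fst)

theorem eraseAnn_map_inl (t : RTree Γ) :
    eraseAnn (t.map Sum.inl : RTree (Γ ⊕ Q × M)) = t.map Sum.inl := by
  rw [eraseAnn, map_map]
  rfl

@[simp]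
theorem eraseAnn_leaf (q : Q) (m : M) :
    eraseAnn (node (.inr (q, m)) [] : RTree (Γ ⊕ Q × M)) = node (.inr q) [] := by
  simp [eraseAnn]

theorem eraseAnn_eq_leaf_iff {ξ : RTree (Γ ⊕ Q × M)} {q : Q} :
    eraseAnn ξ = node (.inr q) [] ↔ ∃ m, ξ = node (.inr (q, m)) [] := by
  refine ⟨fun h => ?_, by rintro ⟨m, rfl⟩; simp⟩
  obtain ⟨a | ⟨q', m⟩, ts⟩ := ξ <;> simp_all [eraseAnn]

variable [AddCommMonoid M]

def annSum (ξ : RTree (Γ ⊕ Q × M)) : M :=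
  ξ.labelSum (Sum.elim 0 Prod.snd)

theorem annSum_map_inl (t : RTree Γ) : annSum (t.map Sum.inl : RTree (Γ ⊕ Q × M)) = 0 := by
  induction t using RTree.ind with
  | node a ts ih =>
    simp only [annSum] at ih ⊢
    simpa using List.sum_eq_zero (by simpa using ih)

@[simp]
theorem annSum_leaf (q : Q) (m : M) : annSum (node (.inr (q, m)) [] : RTree (Γ ⊕ Q × M)) = m := by
  simp [annSum]

end

variable (G : WTGc S Γ ar) (M : Type)

def AnnProd : Type :=
  {x : G.P × RTree (Γ ⊕ G.Q × M) // eraseAnn x.2 = G.lhs x.1}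

instance [Finite M] : Finite (G.AnnProd M) := by
  have := G.finP
  have hfib : ∀ b, (Sum.map id Prod.fst ⁻¹' {b} : Set (Γ ⊕ G.Q × M)).Finite := by
    rintro (a | q)
    · exact (Set.finite_singleton (Sum.inl a)).subset fun x hx => by cases x <;> simp_all
    · exact ((Set.finite_range fun m : M => (Sum.inr (q, m) : Γ ⊕ G.Q × M))).subset
        fun x hx => by obtain _ | ⟨q', m⟩ := x <;> simp_all
  refine Set.Finite.to_subtype ((Set.finite_univ.prod ((Set.finite_range G.lhs).preimage'
    fun b _ => finite_map_preimage_singleton hfib b)).subset ?_)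
  rintro ⟨p, ℓ⟩ h
  exact ⟨trivial, p, h.symm⟩

variable [AddCommMonoid M] [Finite M] (e : G.P → M) (acc : G.Q → M → Prop)

open Classical in
/-- The annotation `m` of a nonterminal `(q, m)` is the sum of `e` over the productions used
below it. -/
@[reducible]
noncomputable def annotate : WTGc B2 Γ ar where
  Q := G.Q × M
  P := G.AnnProd M
  finQ := by have := G.finQ; infer_instance
  finP := inferInstance
  final qm := if acc qm.1 qm.2 then 1 else 0
  lhs x := x.1.2
  tgt x := (G.tgt x.1.1, e x.1.1 + annSum x.1.2)
  eqc x := G.eqc x.1.1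
  nec x := G.nec x.1.1
  wt _ := 1
  lhs_wf x := by
    have h := (x.2 ▸ G.lhs_wf x.1.1).of_map
    convert h using 2
    ext (_ | _) <;> rfl
  lhs_ne x qm h := G.lhs_ne x.1.1 qm.1 (by rw [← x.2, show x.1.2 = _ from h, eraseAnn_leaf])

variable {G M e acc}

theorem Step.exists_annotate {t : RTree Γ} {ξ ζ : RTree (Γ ⊕ G.Q)} {p : G.P} {w : List ℕ}
    (h : G.Step t ξ p w ζ) {ξ₀ : RTree (Γ ⊕ G.Q × M)} (hξ₀ : eraseAnn ξ₀ = ξ) :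
    ∃ (x : G.AnnProd M) (ζ₀ : RTree (Γ ⊕ G.Q × M)), x.1.1 = p ∧
      (G.annotate M e acc).Step t ξ₀ x w ζ₀ ∧ eraseAnn ζ₀ = ζ ∧
      annSum ζ₀ = e p + annSum ξ₀ := by
  obtain ⟨hsub, rfl, hcon⟩ := h
  rw [← hξ₀, eraseAnn, subtreeAt_map] at hsub
  obtain ⟨ℓ, hℓ, hℓp⟩ := Option.map_eq_some_iff.mp hsub
  obtain ⟨R, hξR, hR⟩ := labelSum_replaceAt (Sum.elim 0 Prod.snd) hℓ
  refine ⟨⟨(p, ℓ), hℓp⟩, _, rfl, ⟨hℓ, rfl, hcon⟩, ?_, ?_⟩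
  · simp [← hξ₀, eraseAnn, replaceAt_map]
  · simp only [annotate, annSum] at hR ⊢
    rw [hR, hξR]
    simp [add_assoc]

theorem Step.of_annotate {t : RTree Γ} {ξ₀ ζ₀ : RTree (Γ ⊕ G.Q × M)} {x : G.AnnProd M}
    {w : List ℕ} (h : (G.annotate M e acc).Step t ξ₀ x w ζ₀) :
    G.Step t (eraseAnn ξ₀) x.1.1 w (eraseAnn ζ₀) ∧ annSum ζ₀ = e x.1.1 + annSum ξ₀ := by
  obtain ⟨hsub, rfl, hcon⟩ := h
  replace hsub : ξ₀.subtreeAt w = some x.1.2 := hsub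
  obtain ⟨R, hξR, hR⟩ := labelSum_replaceAt (Sum.elim 0 Prod.snd) hsub
  refine ⟨⟨?_, ?_, hcon⟩, ?_⟩
  · rw [eraseAnn, subtreeAt_map, hsub, Option.map_some]
    exact congrArg some x.2
  · simp [eraseAnn, replaceAt_map]
  · simp only [annotate, annSum] at hR ⊢
    rw [hR, hξR]
    simp [add_assoc]

theorem Derives.exists_annotate {t : RTree Γ} {ξ η : RTree (Γ ⊕ G.Q)} {d : List (G.P × List ℕ)}
    (h : G.Derives t ξ d η) {ξ₀ : RTree (Γ ⊕ G.Q × M)} (hξ₀ : eraseAnn ξ₀ = ξ) :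
    ∃ (d₀ : List (G.AnnProd M × List ℕ)) (η₀ : RTree (Γ ⊕ G.Q × M)),
      (G.annotate M e acc).Derives t ξ₀ d₀ η₀ ∧ eraseAnn η₀ = η ∧
      d₀.map Prod.snd = d.map Prod.snd ∧ annSum η₀ = (d.map (e ∘ Prod.fst)).sum + annSum ξ₀ := by
  induction h generalizing ξ₀ with
  | refl => exact ⟨[], ξ₀, .refl _, hξ₀, rfl, by simp⟩
  | @step ξ ζ η p w d hs _ ih =>
    obtain ⟨x, ζ₀, rfl, hs₀, hζ₀, hsum⟩ := hs.exists_annotate hξ₀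
    obtain ⟨d₀, η₀, hd₀, hη₀, hpos, hsum'⟩ := ih hζ₀
    exact ⟨(x, w) :: d₀, η₀, .step hs₀ hd₀, hη₀, by simp [hpos],
      by rw [hsum', hsum, List.map_cons, List.sum_cons, Function.comp_apply]; abel⟩

theorem Derives.of_annotate {t : RTree Γ} {ξ₀ η₀ : RTree (Γ ⊕ (G.annotate M e acc).Q)}
    {d₀ : List (G.AnnProd M × List ℕ)} (h : (G.annotate M e acc).Derives t ξ₀ d₀ η₀) :
    G.Derives t (eraseAnn ξ₀) (d₀.map fun y => (y.1.1.1, y.2)) (eraseAnn η₀) ∧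
      annSum η₀ = (d₀.map fun y => e y.1.1.1).sum + annSum ξ₀ := by
  induction h with
  | refl => exact ⟨.refl _, by simp⟩
  | step hs _ ih =>
    obtain ⟨hs', hsum⟩ := hs.of_annotate
    exact ⟨.step hs' ih.1, by rw [ih.2, hsum, List.map_cons, List.sum_cons]; abel⟩

theorem exists_mem_D_annotate_iff (t : RTree Γ) (q : G.Q) (m : M) :
    (∃ d₀, d₀ ∈ (G.annotate M e acc).D (q, m) t) ↔
      ∃ d ∈ G.D q t, (d.map (e ∘ Prod.fst)).sum = m := by
  constructor
  · rintro ⟨d₀, hd₀, hlm⟩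
    obtain ⟨hd, hsum⟩ := hd₀.of_annotate
    rw [eraseAnn_map_inl, eraseAnn_leaf] at hd
    refine ⟨_, ⟨hd, by simpa [Leftmost, Function.comp_def] using hlm⟩, ?_⟩
    simpa [annSum_map_inl, Function.comp_def] using hsum.symm
  · rintro ⟨d, ⟨hd, hlm⟩, rfl⟩
    obtain ⟨d₀, η₀, hd₀, hη₀, hpos, hsum⟩ :=
      hd.exists_annotate (e := e) (acc := acc) (eraseAnn_map_inl t)
    obtain ⟨m, rfl⟩ := eraseAnn_eq_leaf_iff.mp hη₀
    simp only [annSum_leaf, annSum_map_inl, add_zero] at hsum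
    exact ⟨d₀, hsum ▸ hd₀, by simpa [Leftmost, hpos] using hlm⟩

theorem annotate_weight_ne_zero_iff (t : RTree Γ) :
    (G.annotate M e acc).weight t ≠ 0 ↔ ∃ q, ∃ d ∈ G.D q t, acc q (d.map (e ∘ Prod.fst)).sum := by
  have hwt : ∀ d₀, (G.annotate M e acc).wtD d₀ = 1 := fun d₀ => List.prod_eq_one (by simp)
  have hfinal : ∀ q m, (G.annotate M e acc).final (q, m) ≠ 0 ↔ acc q m := fun q m => by
    by_cases h : acc q m <;> simp [h]
  simp only [weight_ne_zero_iff _ (fun s s' => (B2.add_eq_zero_iff s s').mp), hwt, mul_one,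
    Prod.exists, hfinal]
  constructor
  · rintro ⟨q, m, d₀, hd₀, hacc⟩
    obtain ⟨d, hd, rfl⟩ := (exists_mem_D_annotate_iff t q m).mp ⟨d₀, hd₀⟩
    exact ⟨q, d, hd, hacc⟩
  · rintro ⟨q, d, hd, hacc⟩
    obtain ⟨d₀, hd₀⟩ := (exists_mem_D_annotate_iff (acc := acc) t q _).mpr ⟨d, hd, rfl⟩
    exact ⟨q, _, d₀, hd₀, hacc⟩

theorem Positive.annotate (hG : G.Positive) : (G.annotate M e acc).Positive :=
  fun x => hG x.1.1

theorem Classic.annotate (hG : G.Classic) : (G.annotate M e acc).Classic := by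
  intro x c hc
  have lift : ∀ w, IsNTpos (G.lhs x.1.1) w → IsNTpos x.1.2 w := by
    rintro w ⟨q, hq⟩
    rw [ntLabelAt, ← x.2, eraseAnn, subtreeAt_map] at hq
    obtain ⟨s, hs, hsq⟩ := Option.map_eq_some_iff.mp hq
    obtain ⟨m, rfl⟩ := eraseAnn_eq_leaf_iff.mp hsq
    exact ⟨(q, m), hs⟩
  exact (hG x.1.1 c hc).imp (lift _) (lift _)

end Annotation

end WTGc

section Truncation

variable {P : Type} [Finite P]

theorem IsUpperSet.exists_truncate_mem {s : Set (P → ℕ)} (hs : IsUpperSet s) :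
    ∃ B : ℕ, ∀ v ∈ s, (fun p => min (v p) B) ∈ s := by
  by_contra! h
  choose v hv hv' using h
  obtain ⟨g, hg⟩ := (Set.isPWO_of_wellQuasiOrderedLE Set.univ).exists_monotone_subseq
    (f := v) fun _ => Set.mem_univ _
  obtain ⟨B, hB⟩ := Finite.exists_le (v (g 0))
  refine hv' (g B) (hs (fun p => le_min (hg (Nat.zero_le B) p) ?_) (hv (g 0)))
  exact (hB p).trans (g.strictMono.le_apply)

def truncCon (P : Type) (B : ℕ) : AddCon (P → ℕ) where
  r v w := ∀ p, min (v p) B = min (w p) B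
  iseqv := ⟨fun _ _ => rfl, fun h p => (h p).symm, fun h h' p => (h p).trans (h' p)⟩
  add' h h' p := by have := h p; have := h' p; simp only [Pi.add_apply]; omega

instance (B : ℕ) : Finite (truncCon P B).Quotient :=
  Finite.of_surjective (fun v : P → Fin (B + 1) => ((fun p => (v p : ℕ)) : (truncCon P B).Quotient))
    fun x => AddCon.induction_on x fun v =>
      ⟨fun p => ⟨min (v p) B, by omega⟩, (AddCon.eq _).mpr fun p => by simp⟩

theorem isUpperSet_setOf_mul_finprod_pow_eq_zero {S : Type} [CommSemiring S]
    (c : S) (f : P → S) : IsUpperSet {v : P → ℕ | c * ∏ᶠ p, f p ^ v p = 0} := by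
  intro v w hvw hv
  obtain ⟨u, rfl⟩ := exists_add_of_le hvw
  simp only [Set.mem_ofPred_eq, Pi.add_apply, pow_add] at hv ⊢
  rw [finprod_mul_distrib (Set.toFinite _) (Set.toFinite _), ← mul_assoc, hv, zero_mul]

theorem exists_finite_addCon_saturating {ι : Type} [Finite ι] (s : ι → Set (P → ℕ))
    (hs : ∀ i, IsUpperSet (s i)) :
    ∃ c : AddCon (P → ℕ), Finite c.Quotient ∧ ∀ i v w, c v w → (v ∈ s i ↔ w ∈ s i) := by
  choose B hB using fun i => (hs i).exists_truncate_mem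
  obtain ⟨B₀, hB₀⟩ := Finite.exists_le B
  have key : ∀ i v w, (truncCon P B₀) v w → v ∈ s i → w ∈ s i := fun i v w hvw hv =>
    hs i (fun p => (min_le_min_left _ (hB₀ i)).trans ((hvw p).trans_le (min_le_left _ _)))
      (hB i v hv)
  exact ⟨truncCon P B₀, inferInstance,
    fun i v w hvw => ⟨key i v w hvw, key i w v ((truncCon P B₀).symm hvw)⟩⟩

end Truncation

theorem stmt3_general {S : Type} [CommSemiring S] {Γ : Type} {ar : Γ → ℕ}
    (hzsf : ∀ s s' : S, s + s' = 0 → s = 0 ∧ s' = 0)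
    (G : WTGc S Γ ar) :
    ∃ G₀ : WTGc B2 Γ ar, (∀ t : RTree Γ, G₀.weight t ≠ 0 ↔ t ∈ G.supp) ∧
      (G.Positive → G₀.Positive) ∧ (G.Classic → G₀.Classic) := by
  classical
  have := G.finP
  have := G.finQ
  obtain ⟨c, _, hc⟩ := exists_finite_addCon_saturating
    (fun q => {v : G.P → ℕ | G.final q * ∏ᶠ p, G.wt p ^ v p = 0})
    fun q => isUpperSet_setOf_mul_finprod_pow_eq_zero _ _
  let e : G.P → c.Quotient := c.mk' ∘ fun p => Pi.single p 1
  let acc (q : G.Q) (m : c.Quotient) : Prop :=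
    m.liftOn (fun v => G.final q * ∏ᶠ p, G.wt p ^ v p ≠ 0) fun v w hvw =>
      propext (hc q v w hvw).not
  refine ⟨G.annotate c.Quotient e acc, fun t => ?_, WTGc.Positive.annotate,
    WTGc.Classic.annotate⟩
  rw [WTGc.annotate_weight_ne_zero_iff, WTGc.supp, Set.mem_ofPred_eq, G.weight_ne_zero_iff hzsf]
  refine exists_congr fun q => exists_congr fun d => and_congr_right fun _ => ?_
  have hsum : (d.map (e ∘ Prod.fst)).sum = c.mk' ((d.map Prod.fst).map (Pi.single · 1)).sum := by
    rw [map_list_sum, List.map_map, List.map_map]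
  rw [hsum, List.sum_map_pi_single_one, AddCon.coe_mk', G.wtD_eq_finprod]
  rfl

/-- over a zero-sum free commutative semiring, the support of any
WTGc is constraint-regular, i.e. generated by a WTGc over the Boolean
semiring; positivity and the classic property are preserved. -/
theorem stmt3 {S : Type} [CommSemiring S] {Γ : Type} [Finite Γ] {ar : Γ → ℕ}
    (hzsf : ∀ s s' : S, s + s' = 0 → s = 0 ∧ s' = 0)
    (G : WTGc S Γ ar) :
    ∃ G₀ : WTGc B2 Γ ar, (∀ t : RTree Γ, G₀.weight t ≠ 0 ↔ t ∈ G.supp) ∧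
      (G.Positive → G₀.Positive) ∧ (G.Classic → G₀.Classic) :=
  stmt3_general hzsf G
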